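/- arXiv:2602.04322 — 3 statements merged into one kernel-verified Lean document; each statement's English description precedes it below -/
import Mathlib

section
/- If the validity function f is γ-stable, then the optimal number of segments K_t in the SVP problem is nondecreasing in t: for s ≤ t, K_s ≤ K_t. -/
/-- A valid segmentation 0 = τ₀ < τ₁ < … < τ_K = t, all of whose segments pass
the validity test f ≤ γ. -/
def ValidSeg (f : ℕ → ℕ → ℝ) (γ : ℝ) (t K : ℕ) (τ : ℕ → ℕ) : Prop :=
  τ 0 = 0 ∧ τ K = t ∧ (∀ k < K, τ k < τ (k + 1)) ∧ (∀ k < K, f (τ k) (τ (k + 1)) ≤ γ)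

/-- The minimal number of segments of a valid segmentation of y[0..t]. -/
noncomputable def Kmin (f : ℕ → ℕ → ℝ) (γ : ℝ) (t : ℕ) : ℕ :=
  sInf {K | ∃ τ, ValidSeg f γ t K τ}

/-- If f is γ-stable, the optimal number of segments is nondecreasing in t. -/
theorem stmt_8 (f : ℕ → ℕ → ℝ) (γ : ℝ)
    (hstable : ∀ a b c : ℕ, a < b → b < c → γ < f a b → γ < f a c)
    (s t : ℕ) (hst : s ≤ t) (hex : ∃ K τ, ValidSeg f γ t K τ) :
    Kmin f γ s ≤ Kmin f γ t := by
  have hne : {K | ∃ τ, ValidSeg f γ t K τ}.Nonempty := hex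
  have hmem : Kmin f γ t ∈ {K | ∃ τ, ValidSeg f γ t K τ} := Nat.sInf_mem hne
  obtain ⟨τ, h0, hK, hmono, hval⟩ := hmem
  set K := Kmin f γ t with hKdef
  rcases Nat.eq_zero_or_pos s with hs | hs
  · -- s = 0 : segmentation with 0 segments
    have : Kmin f γ s ≤ 0 :=
      Nat.sInf_le ⟨fun _ => 0, by simp [ValidSeg, hs]⟩
    omega
  · -- s > 0
    have hsτK : s ≤ τ K := by omega
    have hSne : ∃ k, k ∈ {k | s ≤ τ k} := ⟨K, hsτK⟩
    set j := sInf {k | s ≤ τ k} with hjdef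
    have hjmem : s ≤ τ j := Nat.sInf_mem hSne
    have hjK : j ≤ K := Nat.sInf_le hsτK
    have hlt : ∀ k < j, τ k < s := by
      intro k hk
      have := Nat.notMem_of_lt_sInf (by exact hk : k < sInf {k | s ≤ τ k})
      simpa using this
    have hj0 : 0 < j := by
      rcases Nat.eq_zero_or_pos j with h | h
      · have h2 : s ≤ τ 0 := h ▸ hjmem
        omega
      · exact h
    refine le_trans (Nat.sInf_le ?_) hjK
    refine ⟨fun k => if k < j then τ k else s, ?_, ?_, ?_, ?_⟩
    · simp [hj0, h0]
    · simp
    · intro k hk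
      by_cases h1 : k + 1 < j
      · simp only [if_pos (by omega : k < j), if_pos h1]
        exact hmono k (by omega)
      · simp only [if_pos hk, if_neg h1]
        exact hlt k hk
    · intro k hk
      by_cases h1 : k + 1 < j
      · simp only [if_pos (by omega : k < j), if_pos h1]
        exact hval k (by omega)
      · have hkj : k + 1 = j := by omega
        simp only [if_pos hk, if_neg h1]
        by_contra hcon
        push_neg at hcon
        have hτks : τ k < s := hlt k hk
        have hkK : k < K := by omega
        have hle : f (τ k) (τ (k + 1)) ≤ γ := hval k hkK
        rcases lt_or_eq_of_le hjmem with h2 | h2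
        · have := hstable (τ k) s (τ j) hτks (by omega) hcon
          rw [hkj] at hle
          linarith
        · rw [hkj, ← h2] at hle
          linarith
end

section
/- DP recursion correctness for SVP: for 1 ≤ t ≤ n, the lexicographic optimum R_t of the SVP problem on y[0..t] satisfies R_t = min_⪯ { R_s + (1, C(y[s..t])) : 0 ≤ s < t, f(y[s..t]) ≤ γ }, with R_0 = (0,0). -/
/-- The lexicographic order on ℕ × ℝ. -/
def lexLE (p q : ℕ × ℝ) : Prop := p.1 < q.1 ∨ (p.1 = q.1 ∧ p.2 ≤ q.2)

/-- p is a least element of S for the lexicographic order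
(the minimum of an empty set does not exist, i.e. is +∞). -/
def IsLexLeast (S : Set (ℕ × ℝ)) (p : ℕ × ℝ) : Prop := p ∈ S ∧ ∀ q ∈ S, lexLE p q

/-- The set of objective values (K, Σ_k C(y[τ_k..τ_{k+1}])) over valid segmentations of y[0..t]. -/
def SVPvals (C f : ℕ → ℕ → ℝ) (γ : ℝ) (t : ℕ) : Set (ℕ × ℝ) :=
  {p | ∃ K τ, ValidSeg f γ t K τ ∧ p = (K, ∑ k ∈ Finset.range K, C (τ k) (τ (k + 1)))}

/-!
A valid segmentation of `y[0..t]` with `t ≥ 1` is exactly a valid segmentation of `y[0..s]`,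
`s = τ_{K-1} < t`, followed by one feasible last segment `[s, t]`, and appending that segment
adds `(1, C s t)` to the objective. This translation is monotone for the lexicographic order, so
the optimum at `t` is the least of the translated optima at the feasible `s`. The optima at `s`
exist whenever some segmentation does, because the same decomposition shows by induction that
each `SVPvals C f γ s` is finite.
-/

open Finset

lemma lexLE_iff_toLex_le (p q : ℕ × ℝ) : lexLE p q ↔ toLex p ≤ toLex q := by
  rw [Prod.Lex.le_iff]; rfl

lemma lexLE_trans {p q r : ℕ × ℝ} (hpq : lexLE p q) (hqr : lexLE q r) : lexLE p r := by
  rw [lexLE_iff_toLex_le] at *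
  exact hpq.trans hqr

lemma lexLE_antisymm {p q : ℕ × ℝ} (hpq : lexLE p q) (hqp : lexLE q p) : p = q := by
  rw [lexLE_iff_toLex_le] at *
  exact toLex.injective (le_antisymm hpq hqp)

lemma exists_isLexLeast {S : Set (ℕ × ℝ)} (hfin : S.Finite) (hne : S.Nonempty) :
    ∃ p, IsLexLeast S p := by
  obtain ⟨p, hp, hmin⟩ := hfin.exists_minimalFor toLex S hne
  exact ⟨p, hp, fun q hq => (lexLE_iff_toLex_le p q).2 <|
    (le_total (toLex p) (toLex q)).elim id fun hqp => hmin hq hqp⟩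

lemma isLexLeast_iff_of_mem_iff {ι : Type*} {T : Set (ℕ × ℝ)} {P : ι → Prop}
    {S : ι → Set (ℕ × ℝ)} {g : ι → ℕ × ℝ → ℕ × ℝ}
    (hg : ∀ i q r, lexLE q r → lexLE (g i q) (g i r))
    (hS : ∀ i, (S i).Nonempty → ∃ q, IsLexLeast (S i) q)
    (hT : ∀ a, a ∈ T ↔ ∃ i, P i ∧ ∃ q ∈ S i, a = g i q) (p : ℕ × ℝ) :
    IsLexLeast T p ↔ IsLexLeast {r | ∃ i, P i ∧ ∃ q, IsLexLeast (S i) q ∧ r = g i q} p := by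
  have image_mem : ∀ i, P i → ∀ q ∈ S i, g i q ∈ T :=
    fun i hi q hq => (hT _).2 ⟨i, hi, q, hq, rfl⟩
  constructor
  · rintro ⟨hpT, hpmin⟩
    obtain ⟨i, hi, r, hr, rfl⟩ := (hT p).1 hpT
    obtain ⟨q, hqS, hqmin⟩ := hS i ⟨r, hr⟩
    have hpq : g i r = g i q :=
      lexLE_antisymm (hpmin _ (image_mem i hi q hqS)) (hg i q r (hqmin r hr))
    refine ⟨⟨i, hi, q, ⟨hqS, hqmin⟩, hpq⟩, ?_⟩
    rintro _ ⟨j, hj, q', hq', rfl⟩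
    exact hpmin _ (image_mem j hj q' hq'.1)
  · rintro ⟨⟨i, hi, q, hq, rfl⟩, hpmin⟩
    refine ⟨image_mem i hi q hq.1, fun a ha => ?_⟩
    obtain ⟨j, hj, r, hr, rfl⟩ := (hT a).1 ha
    obtain ⟨q', hq'⟩ := hS j ⟨r, hr⟩
    exact lexLE_trans (hpmin _ ⟨j, hj, q', hq', rfl⟩) (hg j q' r (hq'.2 r hr))

section Segmentation

variable {C f : ℕ → ℕ → ℝ} {γ : ℝ}

lemma ValidSeg.of_succ {t K : ℕ} {τ : ℕ → ℕ} (hv : ValidSeg f γ t (K + 1) τ) :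
    τ K < t ∧ f (τ K) t ≤ γ ∧ ValidSeg f γ (τ K) K τ := by
  obtain ⟨h0, hK, hlt, hf⟩ := hv
  refine ⟨hK ▸ hlt K K.lt_succ_self, hK ▸ hf K K.lt_succ_self, h0, rfl,
    fun k hk => hlt k (by omega), fun k hk => hf k (by omega)⟩

lemma ValidSeg.snoc {s t K : ℕ} {τ : ℕ → ℕ} (hv : ValidSeg f γ s K τ) (hst : s < t)
    (hf : f s t ≤ γ) : ValidSeg f γ t (K + 1) (fun k => if k ≤ K then τ k else t) := by
  obtain ⟨h0, hK, hlt, hfτ⟩ := hv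
  refine ⟨by simp [h0], by simp, fun k hk => ?_, fun k hk => ?_⟩
  · rcases Nat.lt_or_ge k K with h | h
    · simpa [h.le, Nat.succ_le_of_lt h] using hlt k h
    · obtain rfl : k = K := by omega
      simp [hK, hst]
  · rcases Nat.lt_or_ge k K with h | h
    · simpa [h.le, Nat.succ_le_of_lt h] using hfτ k h
    · obtain rfl : k = K := by omega
      simpa [hK] using hf

def addSegment (c : ℝ) (q : ℕ × ℝ) : ℕ × ℝ := (q.1 + 1, q.2 + c)

lemma lexLE_addSegment {q r : ℕ × ℝ} (c : ℝ) (h : lexLE q r) :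
    lexLE (addSegment c q) (addSegment c r) := by
  rcases h with h | ⟨h, h'⟩
  · exact Or.inl (by simpa [addSegment] using h)
  · exact Or.inr ⟨by simp [addSegment, h], by simpa [addSegment] using h'⟩

lemma addSegment_mem_SVPvals {s t : ℕ} {q : ℕ × ℝ} (hq : q ∈ SVPvals C f γ s) (hst : s < t)
    (hf : f s t ≤ γ) : addSegment (C s t) q ∈ SVPvals C f γ t := by
  obtain ⟨K, τ, hv, rfl⟩ := hq
  refine ⟨K + 1, _, hv.snoc hst hf, ?_⟩
  have hprefix : ∑ k ∈ range K, C (if k ≤ K then τ k else t) (if k + 1 ≤ K then τ (k + 1) else t)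
      = ∑ k ∈ range K, C (τ k) (τ (k + 1)) := sum_congr rfl fun k hk => by
    have hk : k < K := mem_range.1 hk
    simp [hk.le, Nat.succ_le_of_lt hk]
  rw [addSegment, sum_range_succ, hprefix]
  simp [hv.2.1]

lemma exists_of_mem_SVPvals {t : ℕ} (ht : 1 ≤ t) {p : ℕ × ℝ} (hp : p ∈ SVPvals C f γ t) :
    ∃ s < t, f s t ≤ γ ∧ ∃ q ∈ SVPvals C f γ s, p = addSegment (C s t) q := by
  obtain ⟨K, τ, hv, rfl⟩ := hp
  obtain _ | K := K
  · exact absurd (hv.2.1.symm.trans hv.1) (by omega)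
  obtain ⟨hlt, hf, hv'⟩ := hv.of_succ
  refine ⟨τ K, hlt, hf, _, ⟨K, τ, hv', rfl⟩, ?_⟩
  simp [addSegment, sum_range_succ, hv.2.1]

lemma mem_SVPvals_iff {t : ℕ} (ht : 1 ≤ t) (p : ℕ × ℝ) :
    p ∈ SVPvals C f γ t ↔
      ∃ s < t, f s t ≤ γ ∧ ∃ q ∈ SVPvals C f γ s, p = addSegment (C s t) q := by
  refine ⟨exists_of_mem_SVPvals ht, ?_⟩
  rintro ⟨s, hst, hf, q, hq, rfl⟩
  exact addSegment_mem_SVPvals hq hst hf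

lemma SVPvals_zero_subset : SVPvals C f γ 0 ⊆ {(0, 0)} := by
  rintro _ ⟨_ | K, τ, hv, rfl⟩
  · simp
  · exact absurd hv.of_succ.1 (Nat.not_lt_zero _)

lemma SVPvals_finite (t : ℕ) : (SVPvals C f γ t).Finite := by
  induction t using Nat.strong_induction_on with
  | _ t ih =>
    rcases Nat.eq_zero_or_pos t with rfl | ht
    · exact (Set.finite_singleton _).subset SVPvals_zero_subset
    · refine ((Set.finite_Iio t).biUnion fun s hs => (ih s hs).image (addSegment (C s t))).subset ?_
      intro p hp
      obtain ⟨s, hst, -, q, hq, rfl⟩ := exists_of_mem_SVPvals ht hp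
      exact Set.mem_biUnion hst ⟨q, hq, rfl⟩

end Segmentation

/-- DP recursion correctness for SVP: for 1 ≤ t, R_t is the lexicographic optimum of
the SVP problem on y[0..t] iff it is the lexicographic minimum of
{ R_s + (1, C(y[s..t])) : 0 ≤ s < t, f(y[s..t]) ≤ γ }, where R_s is the lexicographic
optimum at s (terms with no optimum, i.e. R_s = +∞, contribute nothing); note
R_0 = (0,0) since SVPvals at 0 is {(0,0)}. -/
theorem stmt_11 (C f : ℕ → ℕ → ℝ) (γ : ℝ) (t : ℕ) (ht : 1 ≤ t) (p : ℕ × ℝ) :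
    IsLexLeast (SVPvals C f γ t) p ↔
      IsLexLeast {r | ∃ s < t, f s t ≤ γ ∧
        ∃ q, IsLexLeast (SVPvals C f γ s) q ∧ r = (q.1 + 1, q.2 + C s t)} p := by
  have hbellman := isLexLeast_iff_of_mem_iff (P := fun s => s < t ∧ f s t ≤ γ)
    (fun s q r => lexLE_addSegment (C s t))
    (fun s => exists_isLexLeast (SVPvals_finite s))
    (fun a => by simpa only [and_assoc] using mem_SVPvals_iff ht a) p
  simpa only [and_assoc, addSegment] using hbellman
end

section
/- PELT-like pruning rule for SVP: suppose the cost C is superadditive on splits (C(y[s..t]) + C(y[t..u]) ≤ C(y[s..u]) for s < t < u) and the validity function f is γ⁻¹-stable. If for indices s < t the optimal values satisfy (K_s, Q_s + C(y[s..t])) ≻ (K_t, Q_t) in lexicographic order, then for every u > t with f(y[s..u]) ≤ γ, we have (K_s, Q_s) + (1, C(y[s..u])) ≻ (K_t, Q_t) + (1, C(y[t..u])) and moreover f(y[t..u]) ≤ γ; hence index s can never yield the optimum at any future time u. -/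
/-- The strict lexicographic order on ℕ × ℝ. -/
def lexLT (p q : ℕ × ℝ) : Prop := p.1 < q.1 ∨ (p.1 = q.1 ∧ p.2 < q.2)

/-- PELT-like pruning rule for SVP. (K_s, Q_s) and (K_t, Q_t) denote the optimal
values of the SVP problem at times s and t. -/
theorem stmt_12 (C f : ℕ → ℕ → ℝ) (γ : ℝ)
    (hsuper : ∀ s t u : ℕ, s < t → t < u → C s t + C t u ≤ C s u)
    (hstab : ∀ s t u : ℕ, s < t → t < u → γ < f t u → γ < f s u)
    (s t : ℕ) (hst : s < t) (Ks Kt : ℕ) (Qs Qt : ℝ)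
    (hprune : lexLT (Kt, Qt) (Ks, Qs + C s t)) :
    ∀ u, t < u → f s u ≤ γ →
      f t u ≤ γ ∧
      lexLT ((Kt, Qt) + ((1 : ℕ), C t u)) ((Ks, Qs) + ((1 : ℕ), C s u)) := by
  intro u htu hfsu
  refine ⟨?_, ?_⟩
  · by_contra h
    exact absurd hfsu (not_le.mpr (hstab s t u hst htu (not_le.mp h)))
  · have hC := hsuper s t u hst htu
    simp only [lexLT] at hprune ⊢
    rcases hprune with h | ⟨h1, h2⟩
    · exact Or.inl (by simpa using Nat.add_lt_add_right h 1)
    · refine Or.inr ⟨by simpa using h1, ?_⟩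
      simp only [Prod.snd_add]
      linarith
end
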